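/- arXiv:2401.05085 — 2 statements merged into one kernel-verified Lean document; each statement's English description precedes it below -/
import Mathlib

section
/- Let φ be an ordering of G and let u at position i and v at position i+1 be consecutive vertices with rd_φ(u) ≥ rd_φ(v). If u and v are non-adjacent, then swapping them does not decrease the cost: μ_G(φ*) ≥ μ_G(φ), where φ* is φ with u and v swapped. -/
open Finset

variable {V : Type*} [Fintype V] [DecidableEq V]

/-- MSVC cost of an ordering `φ` (positions are `(φ v : ℕ) + 1`, i.e. in `{1,…,n}`). -/
def msvcCost {n : ℕ} (G : SimpleGraph V) [DecidableRel G.Adj] (φ : V ≃ Fin n) : ℕ :=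
  ∑ e ∈ G.edgeFinset,
    Sym2.lift ⟨fun u v => min ((φ u : ℕ) + 1) ((φ v : ℕ) + 1), fun _ _ => min_comm _ _⟩ e

/-- Right degree of `v` in the ordering `φ`. -/
def rightDeg {n : ℕ} (G : SimpleGraph V) [DecidableRel G.Adj] (φ : V ≃ Fin n) (v : V) : ℕ :=
  ((G.neighborFinset v).filter fun u => φ v < φ u).card

/-!
Writing the cost vertex by vertex, `μ_G(φ) = ∑ᵥ (φ(v) + 1) · rd_φ(v)`, each edge is charged to its
left endpoint. Swapping two consecutive non-adjacent vertices leaves every right degree unchanged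
and only exchanges the positions of `u` and `v`, so the cost grows by exactly
`rd_φ(u) - rd_φ(v) ≥ 0`.
-/

section

variable {n : ℕ} (G : SimpleGraph V) [DecidableRel G.Adj] (φ : V ≃ Fin n)

omit [DecidableEq V] in
theorem msvcCost_eq_sum_mul_rightDeg :
    msvcCost G φ = ∑ v, ((φ v : ℕ) + 1) * rightDeg G φ v := by
  set S := (univ ×ˢ univ).filter fun p : V × V => G.Adj p.1 p.2 ∧ φ p.1 < φ p.2
  have hS : ∑ p ∈ S, ((φ p.1 : ℕ) + 1) = ∑ v, ((φ v : ℕ) + 1) * rightDeg G φ v := by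
    rw [sum_finset_product S univ fun v => (G.neighborFinset v).filter fun w => φ v < φ w]
    · simp only [sum_const, smul_eq_mul, rightDeg, mul_comm]
    · simp [S]
  rw [← hS, msvcCost]
  symm
  refine sum_bij (fun p _ => s(p.1, p.2)) (fun p hp => ?_) (fun p hp q hq hpq => ?_)
    (fun e he => ?_) (fun p hp => ?_)
  · simp only [S, mem_filter] at hp
    simpa using hp.2.1
  · simp only [S, mem_filter] at hp hq
    rcases Sym2.eq_iff.mp hpq with ⟨h1, h2⟩ | ⟨h1, h2⟩
    · exact Prod.ext h1 h2
    · exact absurd (hp.2.2.trans (h1 ▸ h2 ▸ hq.2.2)) (lt_irrefl _)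
  · induction e using Sym2.ind with
    | _ a b =>
      have hab : G.Adj a b := by simpa using he
      rcases lt_or_gt_of_ne (φ.injective.ne hab.ne) with h | h
      · exact ⟨(a, b), by simp [S, hab, h], rfl⟩
      · exact ⟨(b, a), by simp [S, hab.symm, h], Sym2.eq_swap⟩
  · simp only [S, mem_filter] at hp
    simp [Sym2.lift_mk, Fin.le_def.mp hp.2.2.le]

variable {u v : V}

omit [Fintype V] in
theorem lt_swap_trans_iff (hconsec : (φ v : ℕ) = (φ u : ℕ) + 1) {x y : V}
    (huv : ¬(x = u ∧ y = v)) (hvu : ¬(x = v ∧ y = u)) :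
    (Equiv.swap u v).trans φ x < (Equiv.swap u v).trans φ y ↔ φ x < φ y := by
  have hval : ∀ a b, a = b ↔ (φ a : ℕ) = φ b := fun a b =>
    (Fin.val_inj.trans φ.injective.eq_iff).symm
  simp only [Equiv.trans_apply, Equiv.swap_apply_def, Fin.lt_def]
  rw [hval x u, hval y v] at huv
  rw [hval x v, hval y u] at hvu
  split_ifs <;> simp only [hval] at * <;> omega

/-- Only the relative order of `u` and `v` changes, and they are not adjacent. -/
theorem rightDeg_swap_trans (hnadj : ¬G.Adj u v) (hconsec : (φ v : ℕ) = (φ u : ℕ) + 1) :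
    rightDeg G ((Equiv.swap u v).trans φ) = rightDeg G φ := by
  funext w
  refine congrArg card (filter_congr fun x hx => lt_swap_trans_iff φ hconsec ?_ ?_)
  all_goals
    rintro ⟨rfl, rfl⟩
    simp only [SimpleGraph.mem_neighborFinset] at hx
  exacts [hnadj hx, hnadj hx.symm]

omit [Fintype V] in
theorem swap_trans_val_add (hconsec : (φ v : ℕ) = (φ u : ℕ) + 1) (w : V) :
    ((Equiv.swap u v).trans φ w : ℕ) + (if w = v then 1 else 0)
      = φ w + (if w = u then 1 else 0) := by
  have hne : u ≠ v := by rintro rfl; omega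
  simp only [Equiv.trans_apply, Equiv.swap_apply_def]
  split_ifs <;> simp_all

theorem sum_swap_trans_mul_add (hconsec : (φ v : ℕ) = (φ u : ℕ) + 1) (f : V → ℕ) :
    ∑ w, (((Equiv.swap u v).trans φ w : ℕ) + 1) * f w + f v
      = ∑ w, ((φ w : ℕ) + 1) * f w + f u := by
  have hpos : ∀ w, (((Equiv.swap u v).trans φ w : ℕ) + 1) * f w + (if w = v then f w else 0)
      = ((φ w : ℕ) + 1) * f w + (if w = u then f w else 0) := by
    intro w
    have := congrArg (· * f w) (swap_trans_val_add φ hconsec w)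
    simp only [add_mul, ite_mul, one_mul, zero_mul] at this
    linarith
  simpa only [sum_add_distrib, sum_ite_eq', mem_univ, if_true] using
    sum_congr rfl fun w (_ : w ∈ univ) => hpos w

end

theorem stmt12_general {n : ℕ} (G : SimpleGraph V) [DecidableRel G.Adj] (φ : V ≃ Fin n)
    (u v : V) (hnadj : ¬ G.Adj u v) (hconsec : (φ v : ℕ) = (φ u : ℕ) + 1)
    (hrd : rightDeg G φ v ≤ rightDeg G φ u) :
    msvcCost G φ ≤ msvcCost G ((Equiv.swap u v).trans φ) := by
  have key := sum_swap_trans_mul_add φ hconsec (rightDeg G φ)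
  rw [msvcCost_eq_sum_mul_rightDeg, msvcCost_eq_sum_mul_rightDeg,
    rightDeg_swap_trans G φ hnadj hconsec]
  omega

theorem stmt12 {n : ℕ} (G : SimpleGraph V) [DecidableRel G.Adj] (φ : V ≃ Fin n)
    (u v : V) (hne : u ≠ v) (hnadj : ¬ G.Adj u v) (hconsec : (φ v : ℕ) = (φ u : ℕ) + 1)
    (hrd : rightDeg G φ v ≤ rightDeg G φ u) :
    msvcCost G φ ≤ msvcCost G ((Equiv.swap u v).trans φ) :=
  stmt12_general G φ u v hnadj hconsec hrd
end

section
/- Suppose in an ordering φ of G the vertices at positions i, i+1, ..., i+t are pairwise non-adjacent and all have the same right degree d. Then any ordering obtained from φ by permuting the vertices in these positions arbitrarily has the same cost μ_G. -/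
open Finset

variable {V : Type*} [Fintype V] [DecidableEq V]

lemma msvcCost_eq_sum_rightDeg {n : ℕ} (G : SimpleGraph V) [DecidableRel G.Adj]
    (φ : V ≃ Fin n) :
    msvcCost G φ = ∑ v, ((φ v : ℕ) + 1) * rightDeg G φ v := by
  classical
  have hrhs : ∀ v : V, ((φ v : ℕ) + 1) * rightDeg G φ v
      = ∑ u ∈ (G.neighborFinset v).filter (fun u => φ v < φ u), ((φ v : ℕ) + 1) := by
    intro v
    rw [Finset.sum_const, rightDeg, smul_eq_mul, mul_comm]
  calc msvcCost G φ
      = ∑ v : V, ∑ u ∈ (G.neighborFinset v).filter (fun u => φ v < φ u),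
          ((φ v : ℕ) + 1) := by
        rw [msvcCost, Finset.sum_sigma']
        refine (Finset.sum_bij (fun (a : Σ _ : V, V) _ => s(a.1, a.2)) ?_ ?_ ?_ ?_).symm
        · rintro ⟨v, u⟩ ha
          simp only [Finset.mem_sigma, Finset.mem_filter, SimpleGraph.mem_neighborFinset] at ha
          simpa [SimpleGraph.mem_edgeFinset] using ha.2.1
        · rintro ⟨v, u⟩ ha ⟨v', u'⟩ ha' h
          simp only [Finset.mem_sigma, Finset.mem_filter, SimpleGraph.mem_neighborFinset] at ha ha'
          rw [Sym2.eq_iff] at h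
          rcases h with ⟨h1, h2⟩ | ⟨h1, h2⟩
          · exact Sigma.ext h1 (heq_of_eq h2)
          · exfalso
            subst h1; subst h2
            exact absurd ha'.2.2 (not_lt_of_gt ha.2.2)
        · intro e he
          rw [SimpleGraph.mem_edgeFinset] at he
          induction e with
          | h v u =>
            rw [SimpleGraph.mem_edgeSet] at he
            rcases lt_or_gt_of_ne (fun h : φ v = φ u => (G.ne_of_adj he) (φ.injective h)) with
              h | h
            · exact ⟨⟨v, u⟩, by
                simp [Finset.mem_sigma, Finset.mem_filter, SimpleGraph.mem_neighborFinset,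
                  he, h], rfl⟩
            · exact ⟨⟨u, v⟩, by
                simp [Finset.mem_sigma, Finset.mem_filter, SimpleGraph.mem_neighborFinset,
                  he.symm, h], Sym2.eq_swap⟩
        · rintro ⟨v, u⟩ ha
          simp only [Finset.mem_sigma, Finset.mem_filter, SimpleGraph.mem_neighborFinset] at ha
          simp only [Sym2.lift_mk]
          have : (φ v : ℕ) + 1 ≤ (φ u : ℕ) + 1 := by
            have := ha.2.2
            rw [Fin.lt_def] at this
            omega
          omega
    _ = ∑ v, ((φ v : ℕ) + 1) * rightDeg G φ v := by
        exact Finset.sum_congr rfl fun v _ => (hrhs v).symm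

theorem stmt16 {n : ℕ} (G : SimpleGraph V) [DecidableRel G.Adj] (φ : V ≃ Fin n)
    (i t d : ℕ)
    (hnonadj : ∀ p q : Fin n, i ≤ (p : ℕ) → (p : ℕ) ≤ i + t → i ≤ (q : ℕ) → (q : ℕ) ≤ i + t →
      p ≠ q → ¬ G.Adj (φ.symm p) (φ.symm q))
    (hdeg : ∀ p : Fin n, i ≤ (p : ℕ) → (p : ℕ) ≤ i + t → rightDeg G φ (φ.symm p) = d)
    (π : Equiv.Perm (Fin n))
    (hπ : ∀ p : Fin n, ((p : ℕ) < i ∨ i + t < (p : ℕ)) → π p = p) :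
    msvcCost G (φ.trans π) = msvcCost G φ := by
  classical
  -- π maps the block into the block
  have hblock : ∀ p : Fin n, i ≤ (p : ℕ) → (p : ℕ) ≤ i + t →
      i ≤ ((π p : Fin n) : ℕ) ∧ ((π p : Fin n) : ℕ) ≤ i + t := by
    intro p h1 h2
    by_contra h
    push_neg at h
    have hout : ((π p : Fin n) : ℕ) < i ∨ i + t < ((π p : Fin n) : ℕ) := by omega
    have h3 := hπ (π p) hout
    have h4 : π p = p := π.injective h3
    rw [h4] at hout
    omega
  have hblock' : ∀ p : Fin n, i ≤ (p : ℕ) → (p : ℕ) ≤ i + t →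
      i ≤ ((π.symm p : Fin n) : ℕ) ∧ ((π.symm p : Fin n) : ℕ) ≤ i + t := by
    intro p h1 h2
    by_contra h
    push_neg at h
    have hout : ((π.symm p : Fin n) : ℕ) < i ∨ i + t < ((π.symm p : Fin n) : ℕ) := by omega
    have h3 := hπ (π.symm p) hout
    rw [Equiv.apply_symm_apply] at h3
    rw [← h3] at hout
    omega
  -- comparisons of positions of adjacent vertices are preserved
  have hcmp : ∀ v u : V, G.Adj v u → (π (φ v) < π (φ u) ↔ φ v < φ u) := by
    intro v u hadj
    by_cases hv : i ≤ (φ v : ℕ) ∧ (φ v : ℕ) ≤ i + t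
    · by_cases hu : i ≤ (φ u : ℕ) ∧ (φ u : ℕ) ≤ i + t
      · exfalso
        refine hnonadj (φ v) (φ u) hv.1 hv.2 hu.1 hu.2 ?_ (by simpa using hadj)
        intro h
        exact G.ne_of_adj hadj (φ.injective h)
      · have h1 : π (φ u) = φ u := hπ (φ u) (by omega)
        have h2 := hblock (φ v) hv.1 hv.2
        rw [Fin.lt_def, Fin.lt_def, h1]
        omega
    · by_cases hu : i ≤ (φ u : ℕ) ∧ (φ u : ℕ) ≤ i + t
      · have h1 : π (φ v) = φ v := hπ (φ v) (by omega)
        have h2 := hblock (φ u) hu.1 hu.2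
        rw [Fin.lt_def, Fin.lt_def, h1]
        omega
      · have h1 : π (φ v) = φ v := hπ (φ v) (by omega)
        have h2 : π (φ u) = φ u := hπ (φ u) (by omega)
        rw [h1, h2]
  -- right degrees are unchanged
  have hrd : ∀ v : V, rightDeg G (φ.trans π) v = rightDeg G φ v := by
    intro v
    unfold rightDeg
    congr 1
    refine Finset.filter_congr ?_
    intro u hu
    rw [SimpleGraph.mem_neighborFinset] at hu
    simpa using hcmp v u hu
  rw [msvcCost_eq_sum_rightDeg, msvcCost_eq_sum_rightDeg]
  simp only [hrd, Equiv.trans_apply]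
  -- reindex by positions
  have hre : ∀ σ : Equiv.Perm (Fin n),
      ∑ v : V, ((σ (φ v) : ℕ) + 1) * rightDeg G φ v
        = ∑ p : Fin n, ((σ p : ℕ) + 1) * rightDeg G φ (φ.symm p) := by
    intro σ
    refine Fintype.sum_equiv φ _ _ ?_
    intro v
    rw [Equiv.symm_apply_apply]
  have h1 := hre π
  have h2 := hre (Equiv.refl (Fin n))
  simp only [Equiv.refl_apply] at h2
  rw [h1, h2]
  rw [← Finset.sum_filter_add_sum_filter_not Finset.univ
    (fun p : Fin n => i ≤ (p : ℕ) ∧ (p : ℕ) ≤ i + t),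
    ← Finset.sum_filter_add_sum_filter_not Finset.univ
    (fun p : Fin n => i ≤ (p : ℕ) ∧ (p : ℕ) ≤ i + t)
    (fun p : Fin n => ((p : ℕ) + 1) * rightDeg G φ (φ.symm p))]
  congr 1
  · -- block part
    have hd : ∀ p ∈ Finset.univ.filter (fun p : Fin n => i ≤ (p : ℕ) ∧ (p : ℕ) ≤ i + t),
        rightDeg G φ (φ.symm p) = d := by
      intro p hp
      rw [Finset.mem_filter] at hp
      exact hdeg p hp.2.1 hp.2.2
    have e1 : ∑ p ∈ Finset.univ.filter (fun p : Fin n => i ≤ (p : ℕ) ∧ (p : ℕ) ≤ i + t),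
        ((π p : ℕ) + 1) * rightDeg G φ (φ.symm p)
        = ∑ p ∈ Finset.univ.filter (fun p : Fin n => i ≤ (p : ℕ) ∧ (p : ℕ) ≤ i + t),
        ((π p : ℕ) + 1) * d := Finset.sum_congr rfl fun p hp => by rw [hd p hp]
    have e2 : ∑ p ∈ Finset.univ.filter (fun p : Fin n => i ≤ (p : ℕ) ∧ (p : ℕ) ≤ i + t),
        ((p : ℕ) + 1) * rightDeg G φ (φ.symm p)
        = ∑ p ∈ Finset.univ.filter (fun p : Fin n => i ≤ (p : ℕ) ∧ (p : ℕ) ≤ i + t),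
        ((p : ℕ) + 1) * d := Finset.sum_congr rfl fun p hp => by rw [hd p hp]
    rw [e1, e2]
    refine Finset.sum_nbij' (fun p => π p) (fun p => π.symm p) ?_ ?_ ?_ ?_ ?_
    · intro p hp
      rw [Finset.mem_filter] at hp ⊢
      exact ⟨Finset.mem_univ _, hblock p hp.2.1 hp.2.2⟩
    · intro p hp
      rw [Finset.mem_filter] at hp ⊢
      exact ⟨Finset.mem_univ _, hblock' p hp.2.1 hp.2.2⟩
    · intro p _; exact π.symm_apply_apply p
    · intro p _; exact π.apply_symm_apply p
    · intro p _; rfl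
  · -- outside part
    refine Finset.sum_congr rfl ?_
    intro p hp
    rw [Finset.mem_filter] at hp
    rw [hπ p (by omega)]
end
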